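/- arXiv:2502.06082 — 5 statements merged into one kernel-verified Lean document; each statement's English description precedes it below -/
import Mathlib

section
/- In any reserve system, there is no infinite sequence μ₀, μ₁, μ₂, … of eligibility-compliant matchings in which each μ_{k+1} is obtained from μ_k by a swap step at some category; equivalently, iterating swap steps starting from any eligibility-compliant matching terminates after finitely many steps. -/
open Finset

variable {I C : Type*}

/-- Agent `i` is eligible for category `c` when `i ≻_c ∅`. -/
def Eligible (prio : C → Option I → Option I → Prop) (i : I) (c : C) : Prop :=
  prio c (some i) none

/-- `μ` is a matching: the set of agents assigned to each category `c`
has at most `q c` elements. -/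
def IsMatching [Fintype I] [DecidableEq C] (q : C → ℕ) (μ : I → Option C) : Prop :=
  ∀ c : C, (Finset.univ.filter (fun i => μ i = some c)).card ≤ q c

/-- `μ` is eligibility-compliant: assigned agents are eligible. -/
def Compliant (prio : C → Option I → Option I → Prop) (μ : I → Option C) : Prop :=
  ∀ (i : I) (c : C), μ i = some c → Eligible prio i c

/-- The number of agents matched under `μ`. -/
def matchedCount [Fintype I] (μ : I → Option C) : ℕ :=
  (Finset.univ.filter (fun i => (μ i).isSome)).card

/-- `μ` has maximum cardinality among eligibility-compliant matchings. -/
def MaxCard [Fintype I] [DecidableEq C] (q : C → ℕ)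
    (prio : C → Option I → Option I → Prop) (μ : I → Option C) : Prop :=
  ∀ μ' : I → Option C, IsMatching q μ' → Compliant prio μ' →
    matchedCount μ' ≤ matchedCount μ

/-- Non-wastefulness: an eligible unmatched agent implies the category is full. -/
def NonWasteful [Fintype I] [DecidableEq C] (q : C → ℕ)
    (prio : C → Option I → Option I → Prop) (μ : I → Option C) : Prop :=
  ∀ (i : I) (c : C), Eligible prio i c → μ i = none →
    (Finset.univ.filter (fun j => μ j = some c)).card = q c

/-- Respect for priorities: a matched agent has higher priority (at its
category) than every unmatched agent. -/
def RespectsPriorities (prio : C → Option I → Option I → Prop)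
    (μ : I → Option C) : Prop :=
  ∀ (i i' : I) (c : C), μ i = some c → μ i' = none → prio c (some i) (some i')

/-- `μ'` is obtained from `μ` by a swap step at category `c`: an unmatched
agent `i`, eligible for `c`, replaces the `≻_c`-least agent `i'` currently
assigned to `c`, where `i ≻_c i'`. -/
def SwapStep (prio : C → Option I → Option I → Prop) (c : C)
    (μ μ' : I → Option C) : Prop :=
  ∃ i i' : I,
    μ i = none ∧ Eligible prio i c ∧
    μ i' = some c ∧
    (∀ j : I, μ j = some c → j ≠ i' → prio c (some j) (some i')) ∧
    prio c (some i) (some i') ∧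
    μ' i = some c ∧ μ' i' = none ∧
    (∀ j : I, j ≠ i → j ≠ i' → μ' j = μ j)

/-- One swap step between eligibility-compliant matchings. -/
def SwapRel [Fintype I] [DecidableEq C] (q : C → ℕ)
    (prio : C → Option I → Option I → Prop) (μ μ' : I → Option C) : Prop :=
  IsMatching q μ ∧ Compliant prio μ ∧ IsMatching q μ' ∧ Compliant prio μ' ∧
    ∃ c : C, SwapStep prio c μ μ'

/-- `μ` is terminal: no swap step applies to `μ`. -/
def Terminal (prio : C → Option I → Option I → Prop) (μ : I → Option C) : Prop :=
  ¬ ∃ (i i' : I) (c : C),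
      μ i = none ∧ Eligible prio i c ∧ μ i' = some c ∧
      (∀ j : I, μ j = some c → j ≠ i' → prio c (some j) (some i')) ∧
      prio c (some i) (some i')

/-- The strict part `▷` of the precedence preorder, extended to `C ∪ {∅}`
by `c ▷ ∅` for every category `c`. -/
def StrictPrec (prec : C → C → Prop) : Option C → Option C → Prop
  | some c, some c' => prec c c' ∧ ¬ prec c' c
  | some _, none => True
  | none, _ => False

/-- The number of agents assigned to preferential treatment categories. -/
def benefCount [Fintype I] [DecidableEq C] (Cstar : Finset C)
    (μ : I → Option C) : ℕ :=
  ∑ c ∈ Cstar, (Finset.univ.filter (fun i => μ i = some c)).card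

/-- `μ` is a maximum beneficiary assignment. -/
def MaxBenef [Fintype I] [DecidableEq C] (q : C → ℕ)
    (prio : C → Option I → Option I → Prop) (Cstar : Finset C)
    (μ : I → Option C) : Prop :=
  ∀ μ' : I → Option C, IsMatching q μ' → Compliant prio μ' →
    benefCount Cstar μ' ≤ benefCount Cstar μ

/-- Order preservation by swapping. -/
def OrderPresSwap (prio : C → Option I → Option I → Prop) (prec : C → C → Prop)
    (μ : I → Option C) : Prop :=
  ¬ ∃ (i j : I) (ci cj : C),
      μ i = some ci ∧ μ j = some cj ∧
      StrictPrec prec (some cj) (some ci) ∧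
      prio cj (some i) (some j) ∧
      Eligible prio j ci ∧ Eligible prio i cj

/-- Respect for precedence over categories. -/
def RespectsPrec [Fintype I] [DecidableEq C] (q : C → ℕ)
    (prio : C → Option I → Option I → Prop) (Cstar : Finset C)
    (prec : C → C → Prop) (μ : I → Option C) : Prop :=
  ¬ ∃ (i j : I) (cj : C),
      μ j = some cj ∧
      StrictPrec prec (some cj) (μ i) ∧
      prio cj (some i) (some j) ∧
      ∃ μ' : I → Option C,
        IsMatching q μ' ∧ Compliant prio μ' ∧
        (∀ (k : I) (ck : C), μ k = some ck →
          StrictPrec prec (some ck) (some cj) → μ' k = μ k) ∧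
        (∀ ℓ : I, μ ℓ = some cj → prio cj (some ℓ) (some i) → μ' ℓ = μ ℓ) ∧
        μ' i = some cj ∧
        MaxCard q prio μ' ∧ MaxBenef q prio Cstar μ'

/-- Order preservation for a hybrid sequential reserve system with open
categories `c01` (processed first) and `c02` (processed last). -/
def OrderPresHybrid (prio : C → Option I → Option I → Prop) (Cstar : Finset C)
    (c01 c02 : C) (μ : I → Option C) : Prop :=
  ∀ (i j : I) (cj : C), μ j = some cj → prio cj (some i) (some j) →
    ((∀ ci : C, μ i = some ci → (ci ∈ Cstar ∨ ci = c02) →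
        Eligible prio j ci → cj ≠ c01) ∧
     ((cj ∈ Cstar ∨ cj = c01) → Eligible prio i cj → μ i ≠ some c02))

/-- `P'` is an `i`-improvement of `P`: the orders agree off `i`, and `i`'s
priority weakly increases in every category. -/
def Improves (i : I) (P P' : C → Option I → Option I → Prop) : Prop :=
  ∀ c : C,
    (∀ x y : Option I, x ≠ some i → y ≠ some i → (P' c x y ↔ P c x y)) ∧
    (∀ x : Option I, x ≠ some i → P c (some i) x → P' c (some i) x)

/-!
Give each matched agent the number of agents it beats in the priority order of its category, and
let the potential of a matching be the sum of these numbers. A swap step at `c` replaces the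
`≻_c`-least assigned agent `i'` by an unmatched agent `i ≻_c i'`, so the potential strictly
increases by `#{j | i ≻_c j} - #{j | i' ≻_c j} > 0`. Since the potential never exceeds `|I|²`,
there can be no infinite sequence of swap steps.
-/

section NumBelow

variable {ι α : Type*} [Fintype ι]

open Classical in
noncomputable def numBelow (r : α → α → Prop) (f : ι → α) (a : α) : ℕ :=
  #{i | r a (f i)}

theorem numBelow_le_card (r : α → α → Prop) (f : ι → α) (a : α) :
    numBelow r f a ≤ Fintype.card ι := by
  classical
  exact (card_filter_le _ _).trans_eq card_univ

theorem numBelow_lt_numBelow (r : α → α → Prop) [IsStrictOrder α r] (f : ι → α)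
    {i : ι} {a : α} (h : r a (f i)) : numBelow r f (f i) < numBelow r f a := by
  classical
  refine card_lt_card ⟨fun j hj => ?_, fun hsub => ?_⟩
  · simp only [mem_filter, mem_univ, true_and] at hj ⊢
    exact _root_.trans h hj
  · have hi : i ∈ ({j | r (f i) (f j)} : Finset ι) := hsub (by simpa using h)
    exact irrefl _ (by simpa using hi)

end NumBelow

theorem Finset.sum_lt_sum_of_eq_off_pair {ι M : Type*} [Fintype ι] [DecidableEq ι]
    [AddCommMonoid M] [Preorder M] [AddRightStrictMono M] {g g' : ι → M} {a b : ι} (hab : a ≠ b) (heq : ∀ j, j ≠ a → j ≠ b → g j = g' j)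
    (hlt : g a + g b < g' a + g' b) : ∑ j, g j < ∑ j, g' j := by
  have hrest : ∑ j ∈ {a, b}ᶜ, g j = ∑ j ∈ {a, b}ᶜ, g' j :=
    sum_congr rfl fun j hj => by
      simp only [mem_compl, mem_insert, mem_singleton, not_or] at hj
      exact heq j hj.1 hj.2
  rw [← sum_add_sum_compl {a, b} g, ← sum_add_sum_compl {a, b} g', hrest,
    sum_pair hab, sum_pair hab]
  exact add_lt_add_left hlt _

section Potential

variable [Fintype I]

noncomputable def swapPotential (prio : C → Option I → Option I → Prop) (μ : I → Option C) : ℕ :=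
  ∑ j, (μ j).elim 0 fun c => numBelow (prio c) some (some j)

theorem swapPotential_le (prio : C → Option I → Option I → Prop) (μ : I → Option C) :
    swapPotential prio μ ≤ Fintype.card I * Fintype.card I := by
  refine (sum_le_card_nsmul univ _ (Fintype.card I) fun j _ => ?_).trans_eq (by simp)
  cases μ j with
  | none => exact Nat.zero_le _
  | some c => exact numBelow_le_card _ _ _

theorem swapPotential_lt_of_swapStep {prio : C → Option I → Option I → Prop} {c : C}
    [IsStrictOrder (Option I) (prio c)] {μ μ' : I → Option C}
    (h : SwapStep prio c μ μ') : swapPotential prio μ < swapPotential prio μ' := by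
  classical
  obtain ⟨i, i', hi, -, hi', -, hprio, hi_new, hi'_new, hframe⟩ := h
  have hne : i ≠ i' := by rintro rfl; simp [hi] at hi'
  refine sum_lt_sum_of_eq_off_pair hne (fun j hj hj' => by rw [hframe j hj hj']) ?_
  simpa [hi, hi', hi_new, hi'_new] using numBelow_lt_numBelow (prio c) some hprio

end Potential

theorem no_infinite_swap_sequence_general
    [Fintype I] [DecidableEq C]
    (q : C → ℕ) (prio : C → Option I → Option I → Prop)
    (hstrict : ∀ c : C, IsStrictTotalOrder (Option I) (prio c)) :
    ¬ ∃ μseq : ℕ → I → Option C,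
        (∀ k : ℕ, IsMatching q (μseq k) ∧ Compliant prio (μseq k)) ∧
        (∀ k : ℕ, ∃ c : C, SwapStep prio c (μseq k) (μseq (k + 1))) := by
  rintro ⟨μseq, -, hstep⟩
  have hmono : StrictMono fun k => swapPotential prio (μseq k) :=
    strictMono_nat_of_lt_succ fun k => by
      obtain ⟨c, hc⟩ := hstep k
      have := hstrict c
      exact swapPotential_lt_of_swapStep hc
  set N := Fintype.card I * Fintype.card I
  have hbig : N + 1 ≤ swapPotential prio (μseq (N + 1)) := hmono.id_le (N + 1)
  have hsmall : swapPotential prio (μseq (N + 1)) ≤ N := swapPotential_le prio _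
  omega

/-- There is no infinite sequence of eligibility-compliant
matchings in which each one is obtained from the previous one by a swap
step at some category. -/
theorem no_infinite_swap_sequence
    [Fintype I] [Fintype C] [DecidableEq C]
    (q : C → ℕ) (prio : C → Option I → Option I → Prop)
    (hstrict : ∀ c : C, IsStrictTotalOrder (Option I) (prio c)) :
    ¬ ∃ μseq : ℕ → I → Option C,
        (∀ k : ℕ, IsMatching q (μseq k) ∧ Compliant prio (μseq k)) ∧
        (∀ k : ℕ, ∃ c : C, SwapStep prio c (μseq k) (μseq (k + 1))) :=
  no_infinite_swap_sequence_general q prio hstrict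
end

section
/- Let μ₀ be an eligibility-compliant matching of maximum cardinality in a reserve system, and let μ be a matching obtained from μ₀ by a finite (possibly empty) sequence of swap steps such that μ is terminal. Then μ is eligibility-compliant, respects priorities, is non-wasteful, and has maximum cardinality. -/
open Finset

variable {I C : Type*}

/-!
Swap steps neither change the number of matched agents nor break feasibility, so the terminal
matching `μ` is still an eligibility-compliant matching of maximum cardinality. Maximum
cardinality forces non-wastefulness: an eligible unmatched agent could otherwise be added to a
category with a free seat. Terminality forces respect of priorities: an unmatched agent beating
some agent of category `c` also beats the `≻_c`-least agent of `c`, so a swap step would apply.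
-/

open Function

theorem Finset.exists_rel_greatest {α : Type*} (r : α → α → Prop) [IsStrictTotalOrder α r]
    {s : Finset α} (hs : s.Nonempty) : ∃ m ∈ s, ∀ j ∈ s, j ≠ m → r j m := by
  classical
  let := linearOrderOfSTO r
  exact ⟨s.max' hs, s.max'_mem hs, fun j hj hne => lt_of_le_of_ne (s.le_max' j hj) hne⟩

theorem card_filter_eq_succ_of_forall_ne {α : Type*} [Fintype α] [DecidableEq α]
    {p p' : α → Prop} [DecidablePred p] [DecidablePred p'] {a : α}
    (hp : ¬ p a) (hp' : p' a) (h : ∀ j ≠ a, p' j ↔ p j) :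
    #(univ.filter p') = #(univ.filter p) + 1 := by
  have hset : univ.filter p' = insert a (univ.filter p) := by
    ext j
    by_cases hj : j = a
    · subst hj; simp [hp']
    · simp [hj, h j hj]
  rw [hset, card_insert_of_notMem (by simp [hp])]

variable {q : C → ℕ} {prio : C → Option I → Option I → Prop} {μ₀ μ : I → Option C}

theorem SwapStep.matchedCount_eq [Fintype I] {c : C} {μ' : I → Option C}
    (h : SwapStep prio c μ μ') : matchedCount μ' = matchedCount μ := by
  classical
  obtain ⟨i, i', hi, -, hi', -, -, h'i, h'i', hoff⟩ := h
  have hne : i ≠ i' := by rintro rfl; simp [hi] at hi'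
  -- Both counts are one less than the count of `μ` with `i` matched as well.
  let matchedOrI : I → Prop := fun j => (μ j).isSome ∨ j = i
  have h₁ : #(univ.filter matchedOrI) = matchedCount μ + 1 :=
    card_filter_eq_succ_of_forall_ne (a := i) (by simp [hi]) (by simp [matchedOrI])
      fun j hj => by simp [matchedOrI, hj]
  have h₂ : #(univ.filter matchedOrI) = matchedCount μ' + 1 := by
    refine card_filter_eq_succ_of_forall_ne (a := i') (by simp [h'i']) (by simp [matchedOrI, hi'])
      fun j hj => ?_
    by_cases hji : j = i
    · subst hji; simp [matchedOrI, h'i]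
    · simp [matchedOrI, hji, hoff j hji hj]
  omega

theorem matchedCount_eq_of_reflTransGen_swapRel [Fintype I] [DecidableEq C]
    (h : Relation.ReflTransGen (SwapRel q prio) μ₀ μ) : matchedCount μ = matchedCount μ₀ := by
  induction h with
  | refl => rfl
  | tail _ hstep ih =>
    obtain ⟨-, -, -, -, _, hswap⟩ := hstep
    exact hswap.matchedCount_eq.trans ih

theorem isMatching_compliant_of_reflTransGen_swapRel [Fintype I] [DecidableEq C]
    (hμ₀ : IsMatching q μ₀) (hμ₀c : Compliant prio μ₀)
    (h : Relation.ReflTransGen (SwapRel q prio) μ₀ μ) : IsMatching q μ ∧ Compliant prio μ := by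
  rcases h.cases_tail with rfl | ⟨_, -, -, -, hm, hc, -⟩
  exacts [⟨hμ₀, hμ₀c⟩, ⟨hm, hc⟩]

theorem MaxCard.of_matchedCount_le [Fintype I] [DecidableEq C] {ν : I → Option C}
    (hμ : MaxCard q prio μ) (h : matchedCount μ ≤ matchedCount ν) : MaxCard q prio ν :=
  fun μ' hm hc => (hμ μ' hm hc).trans h

theorem IsMatching.update [Fintype I] [DecidableEq I] [DecidableEq C] {i : I} {c : C}
    (hμ : IsMatching q μ) (hi : μ i = none) (hc : #(univ.filter fun j => μ j = some c) < q c) :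
    IsMatching q (update μ i (some c)) := by
  intro c'
  by_cases hcc : c' = c
  · subst hcc
    rw [card_filter_eq_succ_of_forall_ne (p := fun j => μ j = some c')
      (p' := fun j => Function.update μ i (some c') j = some c') (a := i) (by simp [hi]) (by simp)
      fun j hj => by simp [hj]]
    omega
  · convert hμ c' using 3 with j
    by_cases hj : j = i
    · subst hj; simp [hi, Ne.symm hcc]
    · simp [hj]

theorem Compliant.update [DecidableEq I] {i : I} {c : C} (hμ : Compliant prio μ)
    (hic : Eligible prio i c) : Compliant prio (update μ i (some c)) := by
  intro j c' hj
  by_cases hji : j = i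
  · subst hji
    simp only [update_self, Option.some.injEq] at hj
    exact hj ▸ hic
  · exact hμ j c' (by simpa [hji] using hj)

theorem matchedCount_update [Fintype I] [DecidableEq I] {i : I} {c : C} (hi : μ i = none) :
    matchedCount (update μ i (some c)) = matchedCount μ + 1 :=
  card_filter_eq_succ_of_forall_ne (a := i) (by simp [hi]) (by simp) fun j hj => by simp [hj]

theorem MaxCard.nonWasteful [Fintype I] [DecidableEq C] (hm : IsMatching q μ)
    (hc : Compliant prio μ) (hmax : MaxCard q prio μ) : NonWasteful q prio μ := by
  classical
  intro i c hic hi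
  by_contra hfull
  have hfree := lt_of_le_of_ne (hm c) hfull
  have := hmax _ (hm.update hi hfree) (hc.update hic)
  rw [matchedCount_update hi] at this
  omega

theorem Terminal.respectsPriorities [Fintype I]
    (hstrict : ∀ c : C, IsStrictTotalOrder (Option I) (prio c))
    (hc : Compliant prio μ) (hterm : Terminal prio μ) : RespectsPriorities prio μ := by
  classical
  intro i i' c hi hi'
  have := hstrict c
  rcases trichotomous_of (prio c) (some i) (some i') with h | h | h
  · exact h
  · cases Option.some.inj h
    simp [hi] at hi'
  · exfalso
    let assigned : Finset (Option I) := (univ.filter fun j => μ j = some c).map .some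
    obtain ⟨_, hm, hleast⟩ := assigned.exists_rel_greatest (prio c) ⟨some i, by simp [assigned, hi]⟩
    obtain ⟨m, hmc, rfl⟩ := mem_map.mp hm
    have hleast' : ∀ j, μ j = some c → j ≠ m → prio c (some j) (some m) := fun j hj hjm =>
      hleast (some j) (by simp [assigned, hj]) (by simpa using hjm)
    have hi'm : prio c (some i') (some m) := by
      by_cases him : i = m
      · exact him ▸ h
      · exact _root_.trans h (hleast' i hi him)
    exact hterm ⟨i', m, c, hi', _root_.trans h (hc i c hi), (mem_filter.mp hmc).2, hleast', hi'm⟩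

theorem terminal_swap_reachable_satisfies_axioms_general
    [Fintype I] [DecidableEq C]
    (q : C → ℕ) (prio : C → Option I → Option I → Prop)
    (hstrict : ∀ c : C, IsStrictTotalOrder (Option I) (prio c))
    (μ₀ μ : I → Option C)
    (hμ₀ : IsMatching q μ₀) (hμ₀c : Compliant prio μ₀)
    (hμ₀max : MaxCard q prio μ₀)
    (hreach : Relation.ReflTransGen (SwapRel q prio) μ₀ μ)
    (hterm : Terminal prio μ) :
    IsMatching q μ ∧ Compliant prio μ ∧ RespectsPriorities prio μ ∧
      NonWasteful q prio μ ∧ MaxCard q prio μ := by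
  obtain ⟨hm, hc⟩ := isMatching_compliant_of_reflTransGen_swapRel hμ₀ hμ₀c hreach
  have hmax : MaxCard q prio μ :=
    hμ₀max.of_matchedCount_le (matchedCount_eq_of_reflTransGen_swapRel hreach).ge
  exact ⟨hm, hc, hterm.respectsPriorities hstrict hc, hmax.nonWasteful hm hc, hmax⟩

/-- Starting from an eligibility-compliant matching of maximum
cardinality, any terminal matching reached by finitely many swap steps is
eligibility-compliant, respects priorities, is non-wasteful, and has
maximum cardinality. -/
theorem terminal_swap_reachable_satisfies_axioms
    [Fintype I] [Fintype C] [DecidableEq C]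
    (q : C → ℕ) (prio : C → Option I → Option I → Prop)
    (hstrict : ∀ c : C, IsStrictTotalOrder (Option I) (prio c))
    (μ₀ μ : I → Option C)
    (hμ₀ : IsMatching q μ₀) (hμ₀c : Compliant prio μ₀)
    (hμ₀max : MaxCard q prio μ₀)
    (hreach : Relation.ReflTransGen (SwapRel q prio) μ₀ μ)
    (hterm : Terminal prio μ) :
    IsMatching q μ ∧ Compliant prio μ ∧ RespectsPriorities prio μ ∧
      NonWasteful q prio μ ∧ MaxCard q prio μ :=
  terminal_swap_reachable_satisfies_axioms_general q prio hstrict μ₀ μ hμ₀ hμ₀c hμ₀max hreach hterm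
end

section
/- In a sequential reserve system, let μ be an eligibility-compliant matching that has maximum cardinality and is a maximum beneficiary assignment. If μ respects precedence over categories, then μ satisfies order preservation by swapping. -/
open Finset

variable {I C : Type*}

/-- For an eligibility-compliant matching of maximum cardinality
that is a maximum beneficiary assignment, respect for precedence over
categories implies order preservation by swapping. -/
theorem respectsPrec_implies_orderPresSwap
    [Fintype I] [Fintype C] [DecidableEq C]
    (q : C → ℕ) (prio : C → Option I → Option I → Prop)
    (hstrict : ∀ c : C, IsStrictTotalOrder (Option I) (prio c))
    (Cstar : Finset C) (prec : C → C → Prop)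
    (hTrans : ∀ a b c : C, prec a b → prec b c → prec a c)
    (hTotal : ∀ a b : C, prec a b ∨ prec b a)
    (μ : I → Option C)
    (hμ : IsMatching q μ) (hμc : Compliant prio μ)
    (hmax : MaxCard q prio μ) (hben : MaxBenef q prio Cstar μ)
    (hresp : RespectsPrec q prio Cstar prec μ) :
    OrderPresSwap prio prec μ := by
  classical
  rintro ⟨i, j, ci, cj, hi, hj, hprec, hpr, helj, heli⟩
  have hij : i ≠ j := by
    rintro rfl; exact (hstrict cj).irrefl _ hpr
  have hcij : ci ≠ cj := by
    rintro rfl; exact hprec.2 hprec.1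
  set e := Equiv.swap i j with he
  set μ' : I → Option C := fun k => μ (e k) with hμ'def
  have hei : μ' i = some cj := by
    simp [hμ'def, he, hj]
  have hej : μ' j = some ci := by
    simp [hμ'def, he, Equiv.swap_apply_right, hi]
  have hother : ∀ k, k ≠ i → k ≠ j → μ' k = μ k := by
    intro k h1 h2
    simp [hμ'def, he, Equiv.swap_apply_of_ne_of_ne h1 h2]
  have hcard : ∀ (p : I → Prop) [DecidablePred p],
      (univ.filter (fun x => p (e x))).card = (univ.filter p).card := by
    intro p _
    apply Finset.card_bij' (fun a _ => e a) (fun b _ => e.symm b) <;> simp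
  have hcountc : ∀ c : C,
      (univ.filter (fun x => μ' x = some c)).card
        = (univ.filter (fun x => μ x = some c)).card := by
    intro c
    simpa [hμ'def] using hcard (fun x => μ x = some c)
  have hm' : IsMatching q μ' := by
    intro c; rw [hcountc c]; exact hμ c
  have hc' : Compliant prio μ' := by
    intro k c hk
    rcases eq_or_ne k i with rfl | hki
    · rw [hei] at hk; cases hk; exact heli
    rcases eq_or_ne k j with rfl | hkj
    · rw [hej] at hk; cases hk; exact helj
    · exact hμc k c (by rw [← hother k hki hkj]; exact hk)
  have hmc : matchedCount μ' = matchedCount μ := by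
    simpa [matchedCount, hμ'def] using hcard (fun x => (μ x).isSome)
  have hbc : benefCount Cstar μ' = benefCount Cstar μ := by
    unfold benefCount
    exact Finset.sum_congr rfl (fun c _ => hcountc c)
  refine hresp ⟨i, j, cj, hj, ?_, hpr, μ', hm', hc', ?_, ?_, hei, ?_, ?_⟩
  · rw [hi]; exact hprec
  · intro k ck hk hsk
    have hki : k ≠ i := by
      rintro rfl
      rw [hi] at hk; cases hk
      exact hsk.2 hprec.1
    have hkj : k ≠ j := by
      rintro rfl
      rw [hj] at hk; cases hk
      exact hsk.2 hsk.1
    exact hother k hki hkj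
  · intro ℓ hℓ hpℓ
    have hℓi : ℓ ≠ i := by
      rintro rfl; rw [hi] at hℓ; cases hℓ; exact hcij rfl
    have hℓj : ℓ ≠ j := by
      rintro rfl
      exact (hstrict cj).irrefl _ ((hstrict cj).trans _ _ _ hpℓ hpr)
    exact hother ℓ hℓi hℓj
  · intro μ'' hm'' hc''
    rw [hmc]; exact hmax μ'' hm'' hc''
  · intro μ'' hm'' hc''
    rw [hbc]; exact hben μ'' hm'' hc''
end

section
/- In a hybrid sequential reserve system, an eligibility-compliant matching μ satisfies order preservation if and only if μ satisfies order preservation by swapping with respect to the hybrid precedence order. -/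
open Finset

variable {I C : Type*}

/-- In a hybrid sequential reserve system, an
eligibility-compliant matching satisfies order preservation iff it
satisfies order preservation by swapping w.r.t. the hybrid precedence. -/
theorem orderPresHybrid_iff_orderPresSwap
    [Fintype I] [Fintype C] [DecidableEq C]
    (q : C → ℕ) (prio : C → Option I → Option I → Prop)
    (hstrict : ∀ c : C, IsStrictTotalOrder (Option I) (prio c))
    (Cstar : Finset C) (prec : C → C → Prop)
    (hTrans : ∀ a b c : C, prec a b → prec b c → prec a c)
    (hTotal : ∀ a b : C, prec a b ∨ prec b a)
    (c01 c02 : C)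
    (h01 : c01 ∉ Cstar) (h02 : c02 ∉ Cstar) (hne : c01 ≠ c02)
    (hcover : ∀ c : C, c ∈ Cstar ∨ c = c01 ∨ c = c02)
    (helig1 : ∀ i : I, Eligible prio i c01)
    (helig2 : ∀ i : I, Eligible prio i c02)
    (hp1 : ∀ c ∈ Cstar, StrictPrec prec (some c01) (some c))
    (hp2 : ∀ c ∈ Cstar, StrictPrec prec (some c) (some c02))
    (hp3 : StrictPrec prec (some c01) (some c02))
    (htied : ∀ c ∈ Cstar, ∀ c' ∈ Cstar, prec c c' ∧ prec c' c)
    (μ : I → Option C)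
    (hμ : IsMatching q μ) (hμc : Compliant prio μ) :
    OrderPresHybrid prio Cstar c01 c02 μ ↔ OrderPresSwap prio prec μ := by
  constructor
  · rintro h ⟨i, j, ci, cj, hi, hj, hsp, hpr, heligj, heligi⟩
    obtain ⟨h1, h2⟩ := h i j cj hj hpr
    rcases hcover cj with hcj | hcj | hcj
    · rcases hcover ci with hci | hci | hci
      · exact hsp.2 (htied ci hci cj hcj).1
      · rw [hci] at hsp; exact hsp.2 (hp1 cj hcj).1
      · exact h2 (Or.inl hcj) heligi (hci ▸ hi)
    · rcases hcover ci with hci | hci | hci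
      · exact h1 ci hi (Or.inl hci) heligj hcj
      · rw [hci, hcj] at hsp; exact hsp.2 hsp.1
      · exact h1 ci hi (Or.inr hci) heligj hcj
    · rw [hcj] at hsp
      rcases hcover ci with hci | hci | hci
      · exact hsp.2 (hp2 ci hci).1
      · rw [hci] at hsp; exact hsp.2 hp3.1
      · rw [hci] at hsp; exact hsp.2 hsp.1
  · intro h i j cj hj hpr
    constructor
    · intro ci hi hmem heligj hcj01
      apply h
      refine ⟨i, j, ci, cj, hi, hj, ?_, hpr, heligj, ?_⟩
      · rw [hcj01]
        rcases hmem with hm | hm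
        · exact hp1 ci hm
        · rw [hm]; exact hp3
      · rw [hcj01]; exact helig1 i
    · intro hmem heligi hic02
      apply h
      refine ⟨i, j, c02, cj, hic02, hj, ?_, hpr, helig2 j, heligi⟩
      rcases hmem with hm | hm
      · exact hp2 cj hm
      · rw [hm]; exact hp3
end

section
/- Fix a finite set I of agents, a finite set C of categories, capacities q_c ∈ ℕ, a set C* ⊆ C of preferential treatment categories, and a precedence order whose restriction to C is a strict total order. Let P and P' be priority profiles such that P' is an i-improvement of P for some agent i. Let μ be an eligibility-compliant matching for the sequential reserve system with profile P that has maximum cardinality, is a maximum beneficiary assignment, and respects precedence over categories, and let μ' be such a matching for the system with profile P'. If μ(i) ≠ ∅, then μ'(i) ≠ ∅. -/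
open Finset

variable {I C : Type*}

/-!
Suppose `μ i ≠ ∅` but `μ' i = ∅`. Follow an alternating path from `i`: the seat `i` holds under
`μ` is held under `μ'` by a next agent, whose `μ`-seat is held under `μ'` by the next, and so on.
Since `μ` is `P'`-compliant, switching the path to `μ` would augment `μ'` unless the path ends at
an agent unassigned under `μ`; so it does, and under both matchings the path occupies the same
seats. Let `d` be its category of highest precedence. Switching the part of the path from the
last agent `u` seated at `d` by `μ'` onward from `μ` to `μ'` gives `μ` an extra seat at `d` while
touching only lower categories, so respect of precedence for `μ` puts `u` below every `μ`-holder
of `d` under `P`. Symmetrically, the part up to the first agent `u'` holding `d` under `μ` shows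
that `u'` is below every `μ'`-holder of `d`, in particular `u`, under `P'`. As `u ≠ i`, improving
`i` cannot turn `u' ≻ u` into `u ≻' u'`.
-/

section Occupancy

variable [Fintype I] [DecidableEq C]

def occupancy (ν : I → Option C) (c : C) : ℕ :=
  #{k | ν k = some c}

theorem matchedCount_eq_sum_occupancy [Fintype C] (ν : I → Option C) :
    matchedCount ν = ∑ c, occupancy ν c := by
  rw [matchedCount, card_eq_sum_card_fiberwise (f := ν) (t := univ) (fun _ _ => mem_univ _),
    Fintype.sum_option]
  simp only [occupancy, filter_filter]
  rw [filter_false_of_mem fun k _ h => by simp [h.2] at h, card_empty, zero_add]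
  exact Fintype.sum_congr _ _ fun c => congrArg card (filter_congr fun k _ => by
    cases ν k <;> simp)

theorem occupancy_update [DecidableEq I] (ν : I → Option C) (a : I) (o : Option C) (c : C) :
    occupancy (Function.update ν a o) c + (if ν a = some c then 1 else 0) =
      occupancy ν c + (if o = some c then 1 else 0) := by
  simp only [occupancy, card_filter]
  rw [← add_sum_erase _ _ (mem_univ a), ← add_sum_erase _ _ (mem_univ a),
    sum_congr rfl fun k hk => by rw [Function.update_of_ne (ne_of_mem_erase hk)]]
  simp only [Function.update_self]
  omega

theorem IsMatching.of_occupancy_eq {q : C → ℕ} {ν ρ : I → Option C}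
    (h : ∀ c, occupancy ρ c = occupancy ν c) (hν : IsMatching q ν) : IsMatching q ρ :=
  fun c => (h c).trans_le (hν c)

theorem MaxCard.of_occupancy_eq [Fintype C] {q : C → ℕ} {prio : C → Option I → Option I → Prop}
    {ν ρ : I → Option C} (h : ∀ c, occupancy ρ c = occupancy ν c) (hν : MaxCard q prio ν) :
    MaxCard q prio ρ := by
  intro ρ' h₁ h₂
  rw [matchedCount_eq_sum_occupancy ρ, Fintype.sum_congr _ _ h, ← matchedCount_eq_sum_occupancy]
  exact hν ρ' h₁ h₂

theorem MaxBenef.of_occupancy_eq {q : C → ℕ} {prio : C → Option I → Option I → Prop}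
    {Cstar : Finset C} {ν ρ : I → Option C} (h : ∀ c, occupancy ρ c = occupancy ν c)
    (hν : MaxBenef q prio Cstar ν) : MaxBenef q prio Cstar ρ := by
  intro ρ' h₁ h₂
  calc benefCount Cstar ρ' ≤ benefCount Cstar ν := hν ρ' h₁ h₂
    _ = benefCount Cstar ρ := (sum_congr rfl fun c _ => h c).symm

end Occupancy

section Precedence

variable {prec : C → C → Prop}

theorem StrictPrec.irrefl (c : C) : ¬ StrictPrec prec (some c) (some c) :=
  fun h => h.2 h.1

theorem StrictPrec.asymm {c d : C} (h : StrictPrec prec (some c) (some d)) :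
    ¬ StrictPrec prec (some d) (some c) :=
  fun h' => h.2 h'.1

theorem StrictPrec.trans (hTrans : ∀ a b c : C, prec a b → prec b c → prec a c) {a b c : C}
    (h₁ : StrictPrec prec (some a) (some b)) (h₂ : StrictPrec prec (some b) (some c)) :
    StrictPrec prec (some a) (some c) :=
  ⟨hTrans a b c h₁.1 h₂.1, fun h => h₂.2 (hTrans c a b h h₁.1)⟩

theorem StrictPrec.of_not_of_ne (hTotal : ∀ a b : C, prec a b ∨ prec b a)
    (hAnti : ∀ a b : C, prec a b → prec b a → a = b) {d : C} {o : Option C}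
    (hne : o ≠ some d) (h : ¬ StrictPrec prec o (some d)) : StrictPrec prec (some d) o := by
  obtain _ | c := o
  · trivial
  have hcd : c ≠ d := fun h => hne (congrArg some h)
  refine (hTotal d c).elim (fun hdc => ⟨hdc, fun hcd' => hcd (hAnti c d hcd' hdc)⟩) fun hcd' => ?_
  exact absurd ⟨hcd', fun hdc => hcd (hAnti c d hcd' hdc)⟩ h

theorem exists_top_seat [Finite C] (hTrans : ∀ a b c : C, prec a b → prec b c → prec a c)
    {L : List (Option C)} {c₀ : C} (hc₀ : some c₀ ∈ L) :
    ∃ d, some d ∈ L ∧ ∀ o ∈ L, ¬ StrictPrec prec o (some d) := by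
  have : IsTrans C fun a b => StrictPrec prec (some a) (some b) := ⟨fun _ _ _ => .trans hTrans⟩
  have : Std.Irrefl fun a b : C => StrictPrec prec (some a) (some b) := ⟨StrictPrec.irrefl⟩
  obtain ⟨d, hd, hmax⟩ := (Finite.wellFounded_of_trans_of_irrefl
    fun a b : C => StrictPrec prec (some a) (some b)).has_min {c | some c ∈ L} ⟨c₀, hc₀⟩
  refine ⟨d, hd, fun o ho => ?_⟩
  obtain _ | c := o
  · exact id
  · exact hmax c ho

end Precedence

section Compliance

variable {prio : C → Option I → Option I → Prop}

theorem Compliant.piecewise [DecidableEq I] {ν ν' : I → Option C} (s : Finset I)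
    (hν : Compliant prio ν) (hν' : Compliant prio ν') : Compliant prio (s.piecewise ν ν') := by
  intro k c hk
  by_cases hks : k ∈ s
  · exact hν k c (by rwa [s.piecewise_eq_of_mem _ _ hks] at hk)
  · exact hν' k c (by rwa [s.piecewise_eq_of_notMem _ _ hks] at hk)

theorem Compliant.update_none [DecidableEq I] {ν : I → Option C} (hν : Compliant prio ν) (j : I) :
    Compliant prio (Function.update ν j none) := by
  intro k c hk
  by_cases hkj : k = j
  · simp [hkj] at hk
  · exact hν k c (by rwa [Function.update_of_ne hkj] at hk)

end Compliance

section Improvement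

variable {i : I} {P P' : C → Option I → Option I → Prop}

theorem Improves.compliant (himp : Improves i P P') {ν : I → Option C} (hν : Compliant P ν) :
    Compliant P' ν := by
  intro k c hk
  by_cases hki : k = i
  · subst hki
    exact (himp c).2 none (by simp) (hν k c hk)
  · exact ((himp c).1 (some k) none (by simpa using hki) (by simp)).2 (hν k c hk)

theorem Improves.compliant_of_eq_none (himp : Improves i P P') {ν : I → Option C}
    (hi : ν i = none) (hν : Compliant P' ν) : Compliant P ν := by
  intro k c hk
  have hki : k ≠ i := by rintro rfl; simp [hi] at hk
  exact ((himp c).1 (some k) none (by simpa using hki) (by simp)).1 (hν k c hk)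

theorem Improves.prio_of_prio' (himp : Improves i P P') {c : C} [Std.Trichotomous (P c)]
    [Std.Asymm (P' c)] {j k : I} (hj : j ≠ i) (h : P' c (some j) (some k)) :
    P c (some j) (some k) := by
  by_cases hk : k = i
  · subst hk
    rcases trichotomous_of (P c) (some j) (some k) with h' | h' | h'
    · exact h'
    · exact absurd (Option.some_injective _ h') hj
    · exact absurd ((himp c).2 (some j) (by simpa using hj) h') (asymm_of (P' c) h)
  · exact ((himp c).1 (some j) (some k) (by simpa using hj) (by simpa using hk)).1 h

end Improvement

/-- `AltPath ν ν' s l e`: along `l`, each agent's `ν'`-seat is its predecessor's `ν`-seat, the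
first agent's `ν'`-seat is `s` and the last agent's `ν`-seat is `e` (a seat is an `Option C`,
`none` being the unassigned seat). Moving `l` from `ν` to `ν'` thus takes `s` and frees `e`. -/
inductive AltPath (ν ν' : I → Option C) : Option C → List I → Option C → Prop
  | nil (o : Option C) : AltPath ν ν' o [] o
  | cons {a : I} {l : List I} {e : Option C} :
      AltPath ν ν' (ν a) l e → AltPath ν ν' (ν' a) (a :: l) e

namespace AltPath

variable {ν ν' : I → Option C} {s e : Option C} {l : List I}

theorem head_eq {a : I} (h : AltPath ν ν' s (a :: l) e) : ν' a = s := by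
  cases h
  rfl

theorem append {m : Option C} {l' : List I} (h : AltPath ν ν' s l m) (h' : AltPath ν ν' m l' e) :
    AltPath ν ν' s (l ++ l') e := by
  induction h with
  | nil => exact h'
  | cons _ ih => exact cons (ih h')

theorem reverse (h : AltPath ν ν' s l e) : AltPath ν' ν e l.reverse s := by
  induction h with
  | nil o => exact nil o
  | @cons a l e _ ih =>
    rw [List.reverse_cons]
    exact ih.append (cons (nil _))

theorem perm (h : AltPath ν ν' s l e) : (s :: l.map ν).Perm (e :: l.map ν') := by
  induction h with
  | nil => rfl
  | @cons a l e _ ih => exact ((ih.cons _).trans (.swap _ _ _))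

theorem occupancy_piecewise [Fintype I] [DecidableEq I] [DecidableEq C]
    (h : AltPath ν ν' s l e) (hl : l.Nodup) (c : C) :
    occupancy (l.toFinset.piecewise ν' ν) c + (if e = some c then 1 else 0) =
      occupancy ν c + (if s = some c then 1 else 0) := by
  induction h with
  | nil => simp [occupancy, Finset.piecewise]
  | @cons a l e _ ih =>
    obtain ⟨ha, hl⟩ := List.nodup_cons.1 hl
    have hupd := occupancy_update (l.toFinset.piecewise ν' ν) a (ν' a) c
    rw [← Finset.piecewise_insert, ← List.toFinset_cons,
      l.toFinset.piecewise_eq_of_notMem _ _ (by simpa using ha)] at hupd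
    have := ih hl
    omega

end AltPath

section Optimality

variable [Fintype C] [DecidableEq C] [Fintype I] {q : C → ℕ}
  {prio : C → Option I → Option I → Prop} {ν ν' : I → Option C}

theorem AltPath.exists_closed (hν : IsMatching q ν) (hνc : Compliant prio ν)
    (hmax : MaxCard q prio ν) (hν' : IsMatching q ν') (hν'c : Compliant prio ν')
    {l : List I} {s : Option C} (hl : l.Nodup) (h : AltPath ν ν' s l none) :
    ∃ l', l ⊆ l' ∧ l'.Nodup ∧ AltPath ν ν' none l' none := by
  classical
  obtain _ | c := s
  · exact ⟨l, List.Subset.refl l, hl, h⟩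
  by_cases hext : ∃ x ∉ l, ν x = some c
  · obtain ⟨x, hxl, hx⟩ := hext
    have : Fintype.card I - (x :: l).length < Fintype.card I - l.length := by
      have := (hl.cons hxl).length_le_card
      simp only [List.length_cons] at this ⊢
      omega
    obtain ⟨l', hsub, hl', h'⟩ := exists_closed hν hνc hmax hν' hν'c (hl.cons hxl)
      (AltPath.cons (hx ▸ h))
    exact ⟨l', List.Subset.trans (List.subset_cons_self x l) hsub, hl', h'⟩
  -- Otherwise moving `l` to its `ν'`-seats augments `ν`.
  push Not at hext
  set ρ := l.toFinset.piecewise ν' ν with hρ_def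
  have hocc : ∀ c', occupancy ρ c' = occupancy ν c' + if c' = c then 1 else 0 := by
    intro c'
    simpa [eq_comm] using h.occupancy_piecewise hl c'
  have hρ : IsMatching q ρ := by
    intro c'
    show occupancy ρ c' ≤ q c'
    by_cases hc : c' = c
    · subst hc
      refine (card_le_card (monotone_filter_right _ fun k _ hk => ?_)).trans (hν' c')
      by_cases hkl : k ∈ l.toFinset
      · rwa [hρ_def, l.toFinset.piecewise_eq_of_mem _ _ hkl] at hk
      · rw [hρ_def, l.toFinset.piecewise_eq_of_notMem _ _ hkl] at hk
        exact absurd hk (hext k (by simpa using hkl))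
    · rw [hocc, if_neg hc, add_zero]
      exact hν c'
  have := hmax ρ hρ (hν'c.piecewise _ hνc)
  rw [matchedCount_eq_sum_occupancy, matchedCount_eq_sum_occupancy, Fintype.sum_congr _ _ hocc,
    sum_add_distrib] at this
  simp at this
termination_by Fintype.card I - l.length

end Optimality

theorem AltPath.exists_suffix {prec : C → C → Prop} (hTotal : ∀ a b : C, prec a b ∨ prec b a)
    (hAnti : ∀ a b : C, prec a b → prec b a → a = b) {ν ν' : I → Option C} {s e : Option C}
    {l : List I} {d : C} (h : AltPath ν ν' s l e) (hd : some d ∈ l.map ν')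
    (htop : ∀ o ∈ l.map ν', ¬ StrictPrec prec o (some d)) (he : StrictPrec prec (some d) e) :
    ∃ u t, u :: t <:+ l ∧ AltPath ν ν' (some d) (u :: t) e ∧
      ∀ y ∈ u :: t, StrictPrec prec (some d) (ν y) := by
  induction h with
  | nil => simp at hd
  | @cons a l e hl ih =>
    by_cases hdl : some d ∈ l.map ν'
    · obtain ⟨u, t, hsuf, hp, hbelow⟩ :=
        ih hdl (fun o ho => htop o (List.mem_cons_of_mem _ ho)) he
      exact ⟨u, t, hsuf.trans (List.suffix_cons a l), hp, hbelow⟩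
    have ha : ν' a = some d := by simpa [hdl, eq_comm] using hd
    refine ⟨a, l, List.suffix_refl _, ha ▸ hl.cons, fun y hy => ?_⟩
    have hseats : ((a :: l).map ν).Perm (e :: l.map ν') := by
      have := hl.cons.perm
      simp only [List.map_cons, ha] at this ⊢
      exact (this.trans (.swap _ _ _)).cons_inv
    rcases List.mem_cons.1 (hseats.subset (List.mem_map_of_mem hy)) with hy' | hy'
    · exact hy' ▸ he
    · refine StrictPrec.of_not_of_ne hTotal hAnti (fun hyd => hdl (hyd ▸ hy')) ?_
      exact htop _ (List.mem_cons_of_mem _ hy')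

section RespectsPrec

variable [Fintype I] [Fintype C] [DecidableEq C] {q : C → ℕ}
  {prio : C → Option I → Option I → Prop} {Cstar : Finset C} {prec : C → C → Prop}
  {ν ν' : I → Option C}

theorem RespectsPrec.not_prio_of_hybrid (hν : IsMatching q ν) (hmax : MaxCard q prio ν)
    (hben : MaxBenef q prio Cstar ν) (hresp : RespectsPrec q prio Cstar prec ν) {d : C}
    [Std.Asymm (prio d)] {ρ : I → Option C} (hρc : Compliant prio ρ)
    (hocc : ∀ c, occupancy ρ c = occupancy ν c + if c = d then 1 else 0)
    (hchg : ∀ k, ρ k ≠ ν k → StrictPrec prec (some d) (ν k)) {u : I} (hu : ρ u = some d)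
    (hνu : ν u ≠ some d) {j : I} (hj : ν j = some d) : ¬ prio d (some u) (some j) := by
  classical
  intro huj
  have hρj : ρ j = ν j := by
    by_contra hne
    exact StrictPrec.irrefl d (hj ▸ hchg j hne)
  have hocc' : ∀ c, occupancy (Function.update ρ j none) c = occupancy ν c := by
    intro c
    have := occupancy_update ρ j none c
    rw [hρj, hj, hocc] at this
    split_ifs at this <;> simp_all
  -- `ρ` with `j` unassigned witnesses that `ν` does not respect precedence.
  refine hresp ⟨u, j, d, hj, hchg u fun h => hνu (h.symm.trans hu), huj,
    Function.update ρ j none, IsMatching.of_occupancy_eq hocc' hν, hρc.update_none j, ?_, ?_, ?_,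
    hmax.of_occupancy_eq hocc', hben.of_occupancy_eq hocc'⟩
  · intro k ck hk hkd
    have hkj : k ≠ j := by
      rintro rfl
      rw [hj, Option.some_inj] at hk
      exact StrictPrec.irrefl _ (hk ▸ hkd)
    rw [Function.update_of_ne hkj]
    by_contra hne
    exact (hk ▸ hchg k hne).asymm hkd
  · intro ℓ hℓ hℓu
    have hℓj : ℓ ≠ j := by
      rintro rfl
      exact asymm_of _ hℓu huj
    rw [Function.update_of_ne hℓj]
    by_contra hne
    exact StrictPrec.irrefl d (hℓ ▸ hchg ℓ hne)
  · rw [Function.update_of_ne fun h : u = j => hνu (h ▸ hj), hu]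

theorem RespectsPrec.exists_mem_not_prio (hTotal : ∀ a b : C, prec a b ∨ prec b a)
    (hAnti : ∀ a b : C, prec a b → prec b a → a = b) (hν : IsMatching q ν)
    (hνc : Compliant prio ν) (hmax : MaxCard q prio ν) (hben : MaxBenef q prio Cstar ν)
    (hresp : RespectsPrec q prio Cstar prec ν) (hν'c : Compliant prio ν') {d : C}
    [Std.Asymm (prio d)] {l : List I} (hl : l.Nodup) (h : AltPath ν ν' none l none)
    (hd : some d ∈ l.map ν') (htop : ∀ o ∈ l.map ν', ¬ StrictPrec prec o (some d)) :
    ∃ u, ν' u = some d ∧ ν u ≠ some d ∧ ∀ j, ν j = some d → ¬ prio d (some u) (some j) := by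
  classical
  obtain ⟨u, t, hsuf, hp, hbelow⟩ := h.exists_suffix hTotal hAnti hd htop trivial
  set S := (u :: t).toFinset
  have hνu : ν u ≠ some d := fun h =>
    StrictPrec.irrefl d (by simpa [h] using hbelow u List.mem_cons_self)
  refine ⟨u, hp.head_eq, hνu, fun j hj => hresp.not_prio_of_hybrid hν hmax hben
    (hν'c.piecewise S hνc) (fun c => ?_) (fun k hk => ?_) ?_ hνu hj⟩
  · simpa [eq_comm] using hp.occupancy_piecewise (hl.sublist hsuf.sublist) c
  · by_cases hkS : k ∈ S
    · exact hbelow k (by simpa [S] using hkS)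
    · exact absurd (S.piecewise_eq_of_notMem _ _ hkS) hk
  · rw [S.piecewise_eq_of_mem _ _ (by simp [S]), hp.head_eq]

end RespectsPrec

/-- With a strict total precedence order over categories, if
`P'` is an `i`-improvement of `P`, and `μ` (resp. `μ'`) is an
eligibility-compliant matching for the system with profile `P` (resp. `P'`)
with maximum cardinality and maximum beneficiary assignment respecting
precedence over categories, then `μ(i) ≠ ∅` implies `μ'(i) ≠ ∅`. -/
theorem SCU_respects_improvements
    [Fintype I] [Fintype C] [DecidableEq C]
    (q : C → ℕ) (Cstar : Finset C) (prec : C → C → Prop)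
    (hTrans : ∀ a b c : C, prec a b → prec b c → prec a c)
    (hTotal : ∀ a b : C, prec a b ∨ prec b a)
    (hAnti : ∀ a b : C, prec a b → prec b a → a = b)
    (P P' : C → Option I → Option I → Prop)
    (hP : ∀ c : C, IsStrictTotalOrder (Option I) (P c))
    (hP' : ∀ c : C, IsStrictTotalOrder (Option I) (P' c))
    (i : I) (himp : Improves i P P')
    (μ μ' : I → Option C)
    (hμ : IsMatching q μ) (hμc : Compliant P μ)
    (hmax : MaxCard q P μ) (hben : MaxBenef q P Cstar μ)
    (hresp : RespectsPrec q P Cstar prec μ)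
    (hμ' : IsMatching q μ') (hμ'c : Compliant P' μ')
    (hmax' : MaxCard q P' μ') (hben' : MaxBenef q P' Cstar μ')
    (hresp' : RespectsPrec q P' Cstar prec μ')
    (hi : μ i ≠ none) :
    μ' i ≠ none := by
  intro hni
  obtain ⟨c₀, hc₀⟩ := Option.ne_none_iff_exists'.1 hi
  have hμcP' : Compliant P' μ := himp.compliant hμc
  have hμ'cP : Compliant P μ' := himp.compliant_of_eq_none hni hμ'c
  have hstart : AltPath μ' μ (μ i) [i] (μ' i) := .cons (.nil _)
  obtain ⟨R, hiR, hR, hpath⟩ := AltPath.exists_closed hμ' hμ'c hmax' hμ hμcP'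
    (List.nodup_singleton i) (hni ▸ hstart)
  have hseats : (R.map μ').Perm (R.map μ) := hpath.perm.cons_inv
  obtain ⟨d, hd, htop⟩ := exists_top_seat hTrans
    (hc₀ ▸ List.mem_map_of_mem (hiR (List.mem_singleton_self i)) : some c₀ ∈ R.map μ)
  have := hP d
  have := hP' d
  obtain ⟨u', hu'd, -, hu'⟩ := hresp'.exists_mem_not_prio hTotal hAnti hμ' hμ'c hmax' hben'
    hμcP' hR hpath hd htop
  obtain ⟨u, hud, hu, huu'⟩ := hresp.exists_mem_not_prio hTotal hAnti hμ hμc hmax hben hμ'cP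
    (List.nodup_reverse.2 hR) hpath.reverse (by simpa using hseats.mem_iff.2 hd)
    (by simpa using fun o ho => htop o (hseats.mem_iff.1 ho))
  have hP'uu' : P' d (some u) (some u') := by
    rcases trichotomous_of (P' d) (some u') (some u) with h | h | h
    · exact absurd h (hu' u hud)
    · obtain rfl := Option.some_injective _ h
      exact absurd hu'd hu
    · exact h
  exact huu' u' hu'd (himp.prio_of_prio' (fun h => by simp [h, hni] at hud) hP'uu')
end
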